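/- Let μ₀, μ₁, μ₀′, μ₁′ ∈ ℝ with μ₀ ≤ min(μ₁, μ₀′, μ₁′) and μ₀′ ≤ μ₁′, and let σ > 0. Suppose max(|μ₁′−μ₀|, |μ₁−μ₀|, |μ₀′−μ₀|) ≤ 100σ and μ₁′ > μ₁. Then ‖f_{μ₀,μ₁} − f_{μ₀′,μ₁′}‖_TV ≥ π·δ₂ / (3200·√2·e·σ). -/

import Mathlib

open MeasureTheory ProbabilityTheory Real
open scoped ENNReal NNReal

/-- Total variation distance: `sup_A (f(A) - f'(A))` over measurable sets `A`. -/
noncomputable def tvDist {Ω : Type*} [MeasurableSpace Ω] (f f' : Measure Ω) : ℝ :=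
  ⨆ A : {A : Set Ω // MeasurableSet A}, ((f A.1).toReal - (f' A.1).toReal)

/-- One-dimensional two-component Gaussian mixture with component variance `v`. -/
noncomputable def mix1v (m₀ m₁ : ℝ) (v : ℝ≥0) : Measure ℝ :=
  (1/2 : ℝ≥0∞) • gaussianReal m₀ v + (1/2 : ℝ≥0∞) • gaussianReal m₁ v

/-- One-dimensional mixture `½·N(μ₀,σ²) + ½·N(μ₁,σ²)`. -/
noncomputable def mix1d (μ₀ μ₁ σ : ℝ) : Measure ℝ :=
  mix1v μ₀ μ₁ ⟨σ^2, sq_nonneg σ⟩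

/-!
Both component means move to the right (`μ₀ ≤ μ₀'` and `μ₁ < μ₁'`), so on every half-line
`(-∞, t]` each component contributes a nonnegative amount to `F(t) - F'(t)`, and one component
alone gives a lower bound for the distance. For the component shifted by `d`, take
`t = μ + min d σ`: the window `(μ, t]` lies within one standard deviation of `μ`, where the
density is at least `e^{-1/2} / (√(2π) σ)`. Since `d ≤ 200 σ` we have `min d σ ≥ d / 200`, and the
stated constant follows from `π √π ≤ 8`.
-/

instance (m₀ m₁ : ℝ) (v : ℝ≥0) : IsProbabilityMeasure (mix1v m₀ m₁ v) :=
  ⟨by simp [mix1v, ENNReal.inv_two_add_inv_two]⟩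

lemma sub_le_tvDist {Ω : Type*} [MeasurableSpace Ω] {f : Measure Ω} [IsFiniteMeasure f]
    (f' : Measure Ω) {A : Set Ω} (hA : MeasurableSet A) :
    (f A).toReal - (f' A).toReal ≤ tvDist f f' := by
  refine le_ciSup (f := fun B : {B : Set Ω // MeasurableSet B} ↦ (f B).toReal - (f' B).toReal)
    ⟨(f Set.univ).toReal, ?_⟩ ⟨A, hA⟩
  rintro _ ⟨B, rfl⟩
  exact (sub_le_self _ ENNReal.toReal_nonneg).trans
    (ENNReal.toReal_mono (measure_ne_top f _) (measure_mono (Set.subset_univ _)))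

lemma mix1v_toReal_apply (m₀ m₁ : ℝ) (v : ℝ≥0) (A : Set ℝ) :
    (mix1v m₀ m₁ v A).toReal
      = 2⁻¹ * (gaussianReal m₀ v A).toReal + 2⁻¹ * (gaussianReal m₁ v A).toReal := by
  simp [mix1v, ENNReal.toReal_add, ENNReal.mul_ne_top]

lemma mix1d_comm (μ₀ μ₁ σ : ℝ) : mix1d μ₀ μ₁ σ = mix1d μ₁ μ₀ σ :=
  add_comm _ _

lemma gaussianPDFReal_ge_of_sq_le {m x : ℝ} {v : ℝ≥0} (hx : (x - m) ^ 2 ≤ v) :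
    exp (-2⁻¹) / √(2 * π * v) ≤ gaussianPDFReal m v x := by
  rw [gaussianPDFReal, div_eq_inv_mul]
  gcongr
  rcases eq_or_ne (v : ℝ) 0 with hv | hv
  · simp [hv]
  · rw [neg_div, neg_le_neg_iff, div_le_iff₀ (by positivity)]
    linarith

lemma gaussianReal_Iic_sub_Iic {v : ℝ≥0} (hv : v ≠ 0) {m m' : ℝ} (h : m ≤ m') (t : ℝ) :
    (gaussianReal m v (Set.Iic t)).toReal - (gaussianReal m' v (Set.Iic t)).toReal
      = ∫ x in Set.Ioc (t - (m' - m)) t, gaussianPDFReal m v x := by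
  have hshift : gaussianReal m' v (Set.Iic t) = gaussianReal m v (Set.Iic (t - (m' - m))) := by
    rw [← add_sub_cancel m m', ← gaussianReal_map_add_const,
      Measure.map_apply (measurable_add_const _) measurableSet_Iic]
    congr 1
    ext x
    simp [le_sub_iff_add_le]
  have hpdf : Integrable (gaussianPDFReal m v) := integrable_gaussianPDFReal m v
  rw [hshift, gaussianReal_apply_eq_integral _ hv, gaussianReal_apply_eq_integral _ hv,
    ENNReal.toReal_ofReal (integral_nonneg (gaussianPDFReal_nonneg m v)),
    ENNReal.toReal_ofReal (integral_nonneg (gaussianPDFReal_nonneg m v)),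
    ← Set.Iic_union_Ioc_eq_Iic (show t - (m' - m) ≤ t by linarith),
    setIntegral_union (Set.Iic_disjoint_Ioc le_rfl) measurableSet_Ioc
      hpdf.integrableOn hpdf.integrableOn]
  ring

lemma gaussianReal_Iic_sub_Iic_nonneg {v : ℝ≥0} (hv : v ≠ 0) {m m' : ℝ} (h : m ≤ m') (t : ℝ) :
    0 ≤ (gaussianReal m v (Set.Iic t)).toReal - (gaussianReal m' v (Set.Iic t)).toReal := by
  rw [gaussianReal_Iic_sub_Iic hv h]
  exact setIntegral_nonneg measurableSet_Ioc fun x _ ↦ gaussianPDFReal_nonneg m v x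

lemma le_gaussianReal_Iic_sub_Iic {v : ℝ≥0} (hv : v ≠ 0) {m m' s : ℝ} (hs : 0 ≤ s)
    (hsm : s ≤ m' - m) (hsv : s ≤ √v) :
    s * exp (-2⁻¹) / √(2 * π * v)
      ≤ (gaussianReal m v (Set.Iic (m + s))).toReal
        - (gaussianReal m' v (Set.Iic (m + s))).toReal := by
  rw [gaussianReal_Iic_sub_Iic hv (by linarith)]
  calc s * exp (-2⁻¹) / √(2 * π * v)
      = ∫ _ in Set.Ioc m (m + s), exp (-2⁻¹) / √(2 * π * v) := by
        rw [setIntegral_const, Real.volume_real_Ioc_of_le (by linarith), smul_eq_mul]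
        ring
    _ ≤ ∫ x in Set.Ioc m (m + s), gaussianPDFReal m v x := by
        refine setIntegral_mono_on (integrableOn_const measure_Ioc_lt_top.ne)
          (integrable_gaussianPDFReal m v).integrableOn measurableSet_Ioc fun x hx ↦ ?_
        refine gaussianPDFReal_ge_of_sq_le ?_
        calc (x - m) ^ 2 ≤ s ^ 2 := by gcongr <;> linarith [hx.1, hx.2]
          _ ≤ √v ^ 2 := by gcongr
          _ = v := sq_sqrt v.2
    _ ≤ ∫ x in Set.Ioc (m + s - (m' - m)) (m + s), gaussianPDFReal m v x :=
        setIntegral_mono_set (integrable_gaussianPDFReal m v).integrableOn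
          (ae_of_all _ (gaussianPDFReal_nonneg m v))
          (Set.Ioc_subset_Ioc (by linarith) le_rfl).eventuallyLE

lemma le_tvDist_mix1v {v : ℝ≥0} (hv : v ≠ 0) {a b a' b' s : ℝ} (hb : b ≤ b') (hs : 0 ≤ s)
    (hsa : s ≤ a' - a) (hsv : s ≤ √v) :
    s * exp (-2⁻¹) / (2 * √(2 * π * v)) ≤ tvDist (mix1v a b v) (mix1v a' b' v) := by
  have hfirst := le_gaussianReal_Iic_sub_Iic hv hs hsa hsv
  have hsecond := gaussianReal_Iic_sub_Iic_nonneg hv hb (a + s)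
  calc s * exp (-2⁻¹) / (2 * √(2 * π * v))
      ≤ (mix1v a b v (Set.Iic (a + s))).toReal - (mix1v a' b' v (Set.Iic (a + s))).toReal := by
        rw [mix1v_toReal_apply, mix1v_toReal_apply, mul_comm 2, ← div_div]
        linarith
    _ ≤ tvDist (mix1v a b v) (mix1v a' b' v) := sub_le_tvDist _ measurableSet_Iic

lemma pi_mul_sqrt_pi_le_eight : π * √π ≤ 8 := by
  have hsqrt : √π ≤ 2 := Real.sqrt_le_iff.mpr ⟨by norm_num, by linarith [pi_le_four]⟩
  nlinarith [pi_le_four, pi_pos, Real.sqrt_nonneg π]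

lemma le_tvDist_mix1d {σ : ℝ} (hσ : 0 < σ) {a b a' b' : ℝ} (ha : a ≤ a') (hb : b ≤ b')
    (hd : a' - a ≤ 200 * σ) :
    π * (a' - a) / (3200 * √2 * exp 1 * σ) ≤ tvDist (mix1d a b σ) (mix1d a' b' σ) := by
  set s := min (a' - a) σ
  have hs : 0 ≤ s := le_min (by linarith) hσ.le
  have hds : a' - a ≤ 200 * s := by
    rw [mul_min_of_nonneg _ _ (by norm_num : (0 : ℝ) ≤ 200)]
    exact le_min (by linarith) hd
  have hv : (⟨σ ^ 2, sq_nonneg σ⟩ : ℝ≥0) ≠ 0 := by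
    simpa [← NNReal.coe_ne_zero] using hσ.ne'
  have hsqrt : √(σ ^ 2) = σ := Real.sqrt_sq hσ.le
  have hsσ : s ≤ √(σ ^ 2) := hsqrt.symm ▸ min_le_right _ _
  refine le_trans ?_ (le_tvDist_mix1v hv hb hs (min_le_left _ _) hsσ)
  have hroot : √(2 * π * σ ^ 2) = √2 * √π * σ := by
    rw [Real.sqrt_mul (by positivity), Real.sqrt_mul zero_le_two, hsqrt]
  have hexp : 1 ≤ exp 1 * exp (-2⁻¹) := by
    rw [← exp_add]; exact one_le_exp (by norm_num)
  have hpi := pi_mul_sqrt_pi_le_eight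
  change _ ≤ s * exp (-2⁻¹) / (2 * √(2 * π * σ ^ 2))
  rw [hroot, div_le_div_iff₀ (by positivity) (by positivity)]
  have hK : 0 < 2 * √2 * σ := by positivity
  calc π * (a' - a) * (2 * (√2 * √π * σ)) = (2 * √2 * σ) * ((a' - a) * (π * √π)) := by ring
    _ ≤ (2 * √2 * σ) * (200 * s * 8) := by gcongr
    _ ≤ (2 * √2 * σ) * (200 * s * 8 * (exp 1 * exp (-2⁻¹))) :=
        mul_le_mul_of_nonneg_left (le_mul_of_one_le_right (by positivity) hexp) hK.le
    _ = s * exp (-2⁻¹) * (3200 * √2 * exp 1 * σ) := by ring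

theorem stmt_18_general (μ₀ μ₁ μ₀' μ₁' σ : ℝ) (hσ : 0 < σ)
    (h0 : μ₀ ≤ min μ₁ (min μ₀' μ₁'))
    (hball : max |μ₁' - μ₀| (max |μ₁ - μ₀| |μ₀' - μ₀|) ≤ 100 * σ)
    (hgt : μ₁' > μ₁) :
    tvDist (mix1d μ₀ μ₁ σ) (mix1d μ₀' μ₁' σ) ≥
      π * max |μ₀' - μ₀| |μ₁ - μ₁'| / (3200 * Real.sqrt 2 * Real.exp 1 * σ) := by
  obtain ⟨-, hμ₀, -⟩ : μ₀ ≤ μ₁ ∧ μ₀ ≤ μ₀' ∧ μ₀ ≤ μ₁' := by simpa only [le_min_iff] using h0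
  simp only [max_le_iff, abs_le] at hball
  obtain ⟨⟨-, hμ₁'⟩, ⟨hμ₁, -⟩, -, hμ₀'⟩ := hball
  rw [abs_of_nonneg (sub_nonneg.2 hμ₀), abs_sub_comm, abs_of_nonneg (sub_nonneg.2 hgt.le)]
  rcases le_total (μ₀' - μ₀) (μ₁' - μ₁) with h | h
  · rw [max_eq_right h, mix1d_comm μ₀, mix1d_comm μ₀']
    exact le_tvDist_mix1d hσ hgt.le hμ₀ (by linarith)
  · rw [max_eq_left h]
    exact le_tvDist_mix1d hσ hμ₀ hgt.le (by linarith)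

theorem stmt_18 (μ₀ μ₁ μ₀' μ₁' σ : ℝ) (hσ : 0 < σ)
    (h0 : μ₀ ≤ min μ₁ (min μ₀' μ₁')) (h1 : μ₀' ≤ μ₁')
    (hball : max |μ₁' - μ₀| (max |μ₁ - μ₀| |μ₀' - μ₀|) ≤ 100 * σ)
    (hgt : μ₁' > μ₁) :
    tvDist (mix1d μ₀ μ₁ σ) (mix1d μ₀' μ₁' σ) ≥
      π * max |μ₀' - μ₀| |μ₁ - μ₁'| / (3200 * Real.sqrt 2 * Real.exp 1 * σ) :=
  stmt_18_general μ₀ μ₁ μ₀' μ₁' σ hσ h0 hball hgt
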